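/- Let M = (M_k) be a log-convex weight sequence and let A, C, ρ > 0 and an integer N ≥ 2 be given. Define ψ_N(t) := C·A·Σ_{j=2}^{N} (ρ^{j−1} M_{j−1}/j)·t^j. Then there exist real coefficients (c_i)_{i≥1} and ε > 0 such that the power series g(s) = Σ_{i≥1} c_i s^i converges for |s| < ε, satisfies g(s) = A·s + ψ_N(g(s)) for all |s| < ε, has c₁ = A, and satisfies 0 < i·c_i < A·(4A(CA+1)ρ)^{i−1}·M_{i−1} for every i with 2 ≤ i ≤ N. -/

import Mathlib

/-!
The series is the formal fixed point of `G ↦ A X + ψ_N(G)` in `ℝ⟦X⟧`, reached by Picard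
iteration: as `ψ_N` has no terms of degree below two, each iteration fixes one more coefficient.
If `e` is supermultiplicative with `∑_j b_j A^(j-1) / e_(j-1) ≤ θ ≤ 1`, where `b_j` are the
coefficients of `ψ_N`, then the coefficients of the fixed point are dominated by those of
`X · ∑ A e_k Cat_k X^k`, and from degree two on even by `θ` times them: the Catalan recursion
`Cat_(n+1) = ∑ Cat_k Cat_(n-k)` absorbs the convolutions in `G^j`. Geometric weights
`e_k = q^k` give convergence near `0`, so the formal equation can be evaluated. The weights
`e_k = (A(CA+1)ρ)^k M_k`, supermultiplicative by log-convexity, work with `θ = 1/2`, and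
`i Cat_(i-1) = binom(2i-2, i-1) ≤ 4^(i-1)`.
-/

open PowerSeries Finset

section PicardIteration

variable {R : Type*} [CommRing R]

noncomputable def picardMap (a : R) (b : ℕ → R) (N : ℕ) (G : R⟦X⟧) : R⟦X⟧ :=
  a • X + ∑ j ∈ Icc 2 N, b j • G ^ j

noncomputable def picardIter (a : R) (b : ℕ → R) (N n : ℕ) : R⟦X⟧ := (picardMap a b N)^[n] 0

-- The `i`-th coefficient of the iterates is constant from the `(i + 1)`-st one on
-- (`X_pow_dvd_picardIter_sub`).
noncomputable def picardLimit (a : R) (b : ℕ → R) (N : ℕ) : R⟦X⟧ :=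
  mk fun i => coeff i (picardIter a b N (i + 1))

variable {a : R} {b : ℕ → R} {N : ℕ} {G H : R⟦X⟧}

theorem coeff_picardMap (i : ℕ) :
    coeff i (picardMap a b N G) = a * coeff i X + ∑ j ∈ Icc 2 N, b j * coeff i (G ^ j) := by
  simp [picardMap]

theorem picardIter_succ (n : ℕ) :
    picardIter a b N (n + 1) = picardMap a b N (picardIter a b N n) :=
  Function.iterate_succ_apply' ..

theorem coeff_pow_eq_zero_of_X_dvd (hG : X ∣ G) {i j : ℕ} (h : i < j) : coeff i (G ^ j) = 0 :=
  X_pow_dvd_iff.1 (pow_dvd_pow_of_dvd hG j) i h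

theorem X_pow_succ_dvd_pow_sub_pow (hG : X ∣ G) (hH : X ∣ H) {n : ℕ} (h : X ^ n ∣ G - H)
    {j : ℕ} (hj : 2 ≤ j) : X ^ (n + 1) ∣ G ^ j - H ^ j := by
  obtain ⟨k, rfl⟩ := Nat.exists_eq_add_of_le' hj
  have hsplit : G ^ (k + 2) - H ^ (k + 2) =
      G ^ (k + 1) * (G - H) + (G ^ (k + 1) - H ^ (k + 1)) * H := by
    ring
  rw [hsplit]
  refine dvd_add ?_ ?_
  · rw [pow_succ']
    exact mul_dvd_mul (dvd_pow hG k.succ_ne_zero) h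
  · rw [pow_succ]
    exact mul_dvd_mul (h.trans (sub_dvd_pow_sub_pow _ _ _)) hH

theorem X_pow_succ_dvd_picardMap_sub (hG : X ∣ G) (hH : X ∣ H) {n : ℕ} (h : X ^ n ∣ G - H) :
    X ^ (n + 1) ∣ picardMap a b N G - picardMap a b N H := by
  have hdiff : picardMap a b N G - picardMap a b N H = ∑ j ∈ Icc 2 N, b j • (G ^ j - H ^ j) := by
    simp [picardMap, smul_sub]
  rw [hdiff]
  exact dvd_sum fun j hj =>
    dvd_smul_of_dvd _ (X_pow_succ_dvd_pow_sub_pow hG hH h (mem_Icc.1 hj).1)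

theorem X_dvd_picardMap (hG : X ∣ G) : X ∣ picardMap a b N G :=
  dvd_add (dvd_smul_of_dvd _ dvd_rfl) (dvd_sum fun j hj =>
    dvd_smul_of_dvd _ (dvd_pow hG (by have := (mem_Icc.1 hj).1; omega)))

theorem coeff_one_picardMap (hG : X ∣ G) : coeff 1 (picardMap a b N G) = a := by
  rw [coeff_picardMap, coeff_one_X, mul_one, add_eq_left]
  exact sum_eq_zero fun j hj => by
    rw [coeff_pow_eq_zero_of_X_dvd hG (mem_Icc.1 hj).1, mul_zero]

theorem X_dvd_picardIter (n : ℕ) : X ∣ picardIter a b N n := by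
  induction n with
  | zero => exact dvd_zero _
  | succ n ih => rw [picardIter_succ]; exact X_dvd_picardMap ih

theorem X_pow_dvd_picardIter_succ_sub (n : ℕ) :
    X ^ n ∣ picardIter a b N (n + 1) - picardIter a b N n := by
  induction n with
  | zero => rw [pow_zero]; exact one_dvd _
  | succ n ih =>
    simpa only [picardIter_succ] using
      X_pow_succ_dvd_picardMap_sub (X_dvd_picardIter (n + 1)) (X_dvd_picardIter n) ih

theorem X_pow_dvd_picardIter_sub {m n : ℕ} (h : m ≤ n) :
    X ^ m ∣ picardIter a b N n - picardIter a b N m := by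
  induction n, h using Nat.le_induction with
  | base => rw [sub_self]; exact dvd_zero _
  | succ n hmn ih =>
    have h : X ^ m ∣ (picardIter a b N (n + 1) - picardIter a b N n) +
        (picardIter a b N n - picardIter a b N m) :=
      dvd_add ((pow_dvd_pow X hmn).trans (X_pow_dvd_picardIter_succ_sub n)) ih
    rwa [sub_add_sub_cancel] at h

theorem coeff_picardLimit (i : ℕ) :
    coeff i (picardLimit a b N) = coeff i (picardIter a b N (i + 1)) :=
  coeff_mk _ _

theorem X_pow_dvd_picardLimit_sub (n : ℕ) : X ^ n ∣ picardLimit a b N - picardIter a b N n :=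
  X_pow_dvd_iff.2 fun m hm => by
    rw [map_sub, coeff_picardLimit, sub_eq_zero, eq_comm, ← sub_eq_zero, ← map_sub]
    exact X_pow_dvd_iff.1 (X_pow_dvd_picardIter_sub (a := a) (b := b) (N := N) hm) m
      (lt_add_one m)

theorem X_dvd_picardLimit : X ∣ picardLimit a b N := by
  have h : X ∣ (picardLimit a b N - picardIter a b N 1) + picardIter a b N 1 :=
    dvd_add (by simpa using X_pow_dvd_picardLimit_sub 1) (X_dvd_picardIter 1)
  rwa [sub_add_cancel] at h

theorem picardMap_picardLimit : picardMap a b N (picardLimit a b N) = picardLimit a b N := by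
  set L := picardLimit a b N
  ext n
  rw [← sub_eq_zero, ← map_sub]
  refine X_pow_dvd_iff.1 ?_ n (lt_add_one n)
  have h : X ^ (n + 1) ∣ (picardMap a b N L - picardMap a b N (picardIter a b N n)) +
      (picardIter a b N (n + 1) - L) :=
    dvd_add (X_pow_succ_dvd_picardMap_sub X_dvd_picardLimit (X_dvd_picardIter n)
      (X_pow_dvd_picardLimit_sub n)) (dvd_sub_comm.1 (X_pow_dvd_picardLimit_sub (n + 1)))
  rwa [picardIter_succ, sub_add_sub_cancel] at h

theorem coeff_zero_picardLimit : coeff 0 (picardLimit a b N) = 0 := by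
  rw [coeff_zero_eq_constantCoeff_apply, ← X_dvd_iff]
  exact X_dvd_picardLimit

theorem coeff_one_picardLimit : coeff 1 (picardLimit a b N) = a := by
  rw [← picardMap_picardLimit, coeff_one_picardMap X_dvd_picardLimit]

end PicardIteration

section Evaluation

variable {R : Type*} [NormedCommRing R] {F H : R⟦X⟧} {s : R}

theorem coeff_mul_mul_pow (F H : R⟦X⟧) (s : R) (n : ℕ) :
    coeff n (F * H) * s ^ n =
      ∑ kl ∈ antidiagonal n, (coeff kl.1 F * s ^ kl.1) * (coeff kl.2 H * s ^ kl.2) := by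
  rw [coeff_mul, sum_mul]
  refine sum_congr rfl fun kl hkl => ?_
  rw [← mem_antidiagonal.1 hkl, pow_add]
  ring

theorem summable_norm_coeff_mul_mul_pow (hF : Summable fun n => ‖coeff n F * s ^ n‖)
    (hH : Summable fun n => ‖coeff n H * s ^ n‖) :
    Summable fun n => ‖coeff n (F * H) * s ^ n‖ := by
  simpa only [coeff_mul_mul_pow] using summable_norm_sum_mul_antidiagonal_of_summable_norm hF hH

theorem tsum_coeff_mul_mul_pow [CompleteSpace R] (hF : Summable fun n => ‖coeff n F * s ^ n‖)
    (hH : Summable fun n => ‖coeff n H * s ^ n‖) :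
    ∑' n, coeff n (F * H) * s ^ n = (∑' n, coeff n F * s ^ n) * ∑' n, coeff n H * s ^ n := by
  simp only [coeff_mul_mul_pow]
  exact (tsum_mul_tsum_eq_tsum_sum_antidiagonal_of_summable_norm hF hH).symm

theorem coeff_one_mul_pow (s : R) (n : ℕ) :
    coeff n (1 : R⟦X⟧) * s ^ n = if n = 0 then 1 else 0 := by
  rw [coeff_one]; split_ifs with h <;> simp [h]

theorem summable_norm_coeff_pow_mul_pow (hF : Summable fun n => ‖coeff n F * s ^ n‖) (j : ℕ) :
    Summable fun n => ‖coeff n (F ^ j) * s ^ n‖ := by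
  induction j with
  | zero =>
    simp only [pow_zero, coeff_one_mul_pow]
    exact summable_of_ne_finset_zero (s := {0}) fun n hn => by simp_all
  | succ j ih => rw [pow_succ]; exact summable_norm_coeff_mul_mul_pow ih hF

theorem tsum_coeff_pow_mul_pow [CompleteSpace R] (hF : Summable fun n => ‖coeff n F * s ^ n‖)
    (j : ℕ) : ∑' n, coeff n (F ^ j) * s ^ n = (∑' n, coeff n F * s ^ n) ^ j := by
  induction j with
  | zero => simp only [pow_zero, coeff_one_mul_pow, tsum_ite_eq]
  | succ j ih =>
    rw [pow_succ, tsum_coeff_mul_mul_pow (summable_norm_coeff_pow_mul_pow hF j) hF, ih, pow_succ]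

variable [CompleteSpace R] {a : R} {b : ℕ → R} {N : ℕ}

theorem hasSum_coeff_picardMap_mul_pow (hF : Summable fun n => ‖coeff n F * s ^ n‖) :
    HasSum (fun n => coeff n (picardMap a b N F) * s ^ n)
      (a * s + ∑ j ∈ Icc 2 N, b j * (∑' n, coeff n F * s ^ n) ^ j) := by
  have hX : HasSum (fun n => coeff n (X : R⟦X⟧) * s ^ n) s := by
    convert hasSum_ite_eq 1 s using 1
    funext n
    rw [coeff_X]
    split_ifs with h <;> simp [h]
  have hpow (j : ℕ) : HasSum (fun n => coeff n (F ^ j) * s ^ n) ((∑' n, coeff n F * s ^ n) ^ j) :=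
    (summable_norm_coeff_pow_mul_pow hF j).of_norm.hasSum_iff.2 (tsum_coeff_pow_mul_pow hF j)
  simp only [coeff_picardMap, add_mul, sum_mul, mul_assoc]
  exact (hX.mul_left a).add (hasSum_sum fun j _ => (hpow j).mul_left (b j))

theorem tsum_coeff_picardLimit_mul_pow
    (hL : Summable fun n => ‖coeff n (picardLimit a b N) * s ^ n‖) :
    ∑' n, coeff n (picardLimit a b N) * s ^ n =
      a * s + ∑ j ∈ Icc 2 N, b j * (∑' n, coeff n (picardLimit a b N) * s ^ n) ^ j := by
  conv_lhs => rw [← picardMap_picardLimit]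
  exact (hasSum_coeff_picardMap_mul_pow hL).tsum_eq

end Evaluation

section CoefficientOrder

variable {R : Type*} [CommSemiring R] [PartialOrder R] [IsOrderedRing R] {G H : R⟦X⟧}

theorem coeff_pow_nonneg (hG : ∀ i, 0 ≤ coeff i G) (j i : ℕ) : 0 ≤ coeff i (G ^ j) := by
  induction j generalizing i with
  | zero => rw [pow_zero, coeff_one]; split_ifs <;> simp
  | succ j ih =>
    rw [pow_succ, coeff_mul]
    exact sum_nonneg fun kl _ => mul_nonneg (ih _) (hG _)

theorem coeff_pow_le_coeff_pow (hG : ∀ i, 0 ≤ coeff i G) (hGH : ∀ i, coeff i G ≤ coeff i H)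
    (j i : ℕ) : coeff i (G ^ j) ≤ coeff i (H ^ j) := by
  induction j generalizing i with
  | zero => rfl
  | succ j ih =>
    rw [pow_succ, pow_succ, coeff_mul, coeff_mul]
    exact sum_le_sum fun kl _ => mul_le_mul (ih _) (hGH _) (hG _)
      ((coeff_pow_nonneg hG j _).trans (ih _))

end CoefficientOrder

theorem sum_antidiagonal_catalan_mul_catalan_add_le (n j : ℕ) :
    ∑ kl ∈ antidiagonal n, catalan kl.1 * catalan (kl.2 + j) ≤ catalan (n + j + 1) := by
  rw [catalan_succ', Nat.sum_antidiagonal_eq_sum_range_succ_mk,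
    Nat.sum_antidiagonal_eq_sum_range_succ_mk]
  calc ∑ k ∈ range (n + 1), catalan k * catalan (n - k + j)
      = ∑ k ∈ range (n + 1), catalan k * catalan (n + j - k) :=
        sum_congr rfl fun k hk => by rw [Nat.sub_add_comm (mem_range_succ_iff.1 hk)]
    _ ≤ ∑ k ∈ range (n + j + 1), catalan k * catalan (n + j - k) :=
        sum_le_sum_of_subset (range_subset_range.2 (by omega))

theorem catalan_le_four_pow (n : ℕ) : catalan n ≤ 4 ^ n :=
  calc catalan n ≤ (n + 1) * catalan n := Nat.le_mul_of_pos_left _ n.succ_pos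
    _ = n.centralBinom := succ_mul_catalan_eq_centralBinom n
    _ ≤ 4 ^ n := Nat.centralBinom_le_four_pow n

noncomputable def catalanSeries (A : ℝ) (e : ℕ → ℝ) : ℝ⟦X⟧ := mk fun k => A * e k * catalan k

section CatalanMajorant

variable {A : ℝ} {e : ℕ → ℝ}

theorem coeff_catalanSeries (k : ℕ) : coeff k (catalanSeries A e) = A * e k * catalan k :=
  coeff_mk _ _

theorem coeff_X_mul_catalanSeries_nonneg (hA : 0 ≤ A) (he : ∀ k, 0 ≤ e k) (i : ℕ) :
    0 ≤ coeff i (X * catalanSeries A e) := by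
  cases i with
  | zero => rw [coeff_zero_X_mul]
  | succ k => rw [coeff_succ_X_mul, coeff_catalanSeries]; have := he k; positivity

theorem coeff_catalanSeries_pow_succ_le (hA : 0 ≤ A) (he : ∀ k, 0 ≤ e k)
    (hmul : ∀ k l, e k * e l ≤ e (k + l)) (j n : ℕ) :
    coeff n (catalanSeries A e ^ (j + 1)) ≤ A ^ (j + 1) * e n * catalan (n + j) := by
  induction j generalizing n with
  | zero => rw [zero_add, pow_one, pow_one, add_zero, coeff_catalanSeries]
  | succ j ih =>
    rw [pow_succ', coeff_mul]
    calc ∑ kl ∈ antidiagonal n,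
          coeff kl.1 (catalanSeries A e) * coeff kl.2 (catalanSeries A e ^ (j + 1))
        ≤ ∑ kl ∈ antidiagonal n, A * e kl.1 * catalan kl.1 *
            (A ^ (j + 1) * e kl.2 * catalan (kl.2 + j)) :=
          sum_le_sum fun kl _ => by
            rw [coeff_catalanSeries]
            have := he kl.1
            exact mul_le_mul_of_nonneg_left (ih kl.2) (by positivity)
      _ ≤ ∑ kl ∈ antidiagonal n, A ^ (j + 2) * e n * (catalan kl.1 * catalan (kl.2 + j) : ℕ) :=
          sum_le_sum fun kl hkl => by
            rw [← mem_antidiagonal.1 hkl, Nat.cast_mul]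
            calc A * e kl.1 * catalan kl.1 * (A ^ (j + 1) * e kl.2 * catalan (kl.2 + j))
                = A ^ (j + 2) * (e kl.1 * e kl.2) * (catalan kl.1 * catalan (kl.2 + j)) := by ring
              _ ≤ _ := by gcongr; exact hmul _ _
      _ ≤ A ^ (j + 2) * e n * catalan (n + (j + 1)) := by
          rw [← mul_sum, ← Nat.cast_sum, ← add_assoc]
          have := he n
          gcongr
          exact sum_antidiagonal_catalan_mul_catalan_add_le n j

theorem coeff_pow_succ_mul_le {G : ℝ⟦X⟧} (hA : 0 ≤ A) (he : ∀ k, 0 ≤ e k)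
    (hmul : ∀ k l, e k * e l ≤ e (k + l)) (hG0 : ∀ i, 0 ≤ coeff i G)
    (hGE : ∀ i, coeff i G ≤ coeff i (X * catalanSeries A e)) (j i : ℕ) :
    coeff i (G ^ (j + 1)) * e j ≤ A ^ (j + 1) * e (i - 1) * catalan (i - 1) := by
  calc coeff i (G ^ (j + 1)) * e j ≤ coeff i ((X * catalanSeries A e) ^ (j + 1)) * e j :=
        mul_le_mul_of_nonneg_right (coeff_pow_le_coeff_pow hG0 hGE _ _) (he j)
    _ ≤ A ^ (j + 1) * e (i - 1) * catalan (i - 1) := by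
        rw [mul_pow, coeff_X_pow_mul']
        split_ifs with h
        · obtain ⟨m, rfl⟩ := Nat.exists_eq_add_of_le' h
          rw [Nat.add_sub_cancel, show m + (j + 1) - 1 = m + j by omega]
          calc coeff m (catalanSeries A e ^ (j + 1)) * e j
              ≤ A ^ (j + 1) * e m * catalan (m + j) * e j :=
                mul_le_mul_of_nonneg_right (coeff_catalanSeries_pow_succ_le hA he hmul j m) (he j)
            _ = A ^ (j + 1) * (e m * e j) * catalan (m + j) := by ring
            _ ≤ A ^ (j + 1) * e (m + j) * catalan (m + j) := by gcongr; exact hmul m j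
        · have := he (i - 1)
          rw [zero_mul]
          positivity

end CatalanMajorant

section PicardBounds

variable {A θ : ℝ} {b e : ℕ → ℝ} {N : ℕ} {G : ℝ⟦X⟧}

theorem coeff_picardMap_le (hA : 0 ≤ A) (hb : ∀ j, 0 ≤ b j) (he : ∀ k, 0 < e k)
    (hmul : ∀ k l, e k * e l ≤ e (k + l))
    (hθ : ∑ j ∈ Icc 2 N, b j * A ^ (j - 1) / e (j - 1) ≤ θ) (hG0 : ∀ i, 0 ≤ coeff i G)
    (hGE : ∀ i, coeff i G ≤ coeff i (X * catalanSeries A e)) {i : ℕ} (hi : 2 ≤ i) :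
    coeff i (picardMap A b N G) ≤ θ * (A * e (i - 1) * catalan (i - 1)) := by
  have hterm : ∀ j ∈ Icc 2 N, b j * coeff i (G ^ j) ≤
      b j * A ^ (j - 1) / e (j - 1) * (A * e (i - 1) * catalan (i - 1)) := by
    intro j hj
    obtain ⟨k, rfl⟩ : ∃ k, j = k + 1 := ⟨j - 1, by have := (mem_Icc.1 hj).1; omega⟩
    rw [Nat.add_sub_cancel, div_mul_eq_mul_div, le_div_iff₀ (he k), mul_assoc]
    calc b (k + 1) * (coeff i (G ^ (k + 1)) * e k)
        ≤ b (k + 1) * (A ^ (k + 1) * e (i - 1) * catalan (i - 1)) :=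
          mul_le_mul_of_nonneg_left
            (coeff_pow_succ_mul_le hA (fun k => (he k).le) hmul hG0 hGE k i) (hb _)
      _ = _ := by ring
  have he' := he (i - 1)
  rw [coeff_picardMap, coeff_X, if_neg (by omega), mul_zero, zero_add]
  calc ∑ j ∈ Icc 2 N, b j * coeff i (G ^ j)
      ≤ ∑ j ∈ Icc 2 N, b j * A ^ (j - 1) / e (j - 1) * (A * e (i - 1) * catalan (i - 1)) :=
        sum_le_sum hterm
    _ = (∑ j ∈ Icc 2 N, b j * A ^ (j - 1) / e (j - 1)) * (A * e (i - 1) * catalan (i - 1)) :=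
        (sum_mul ..).symm
    _ ≤ θ * (A * e (i - 1) * catalan (i - 1)) := by gcongr

theorem coeff_picardIter_nonneg (hA : 0 ≤ A) (hb : ∀ j, 0 ≤ b j) (n i : ℕ) :
    0 ≤ coeff i (picardIter A b N n) := by
  induction n generalizing i with
  | zero => simp [picardIter]
  | succ n ih =>
    rw [picardIter_succ, coeff_picardMap, coeff_X]
    exact add_nonneg (mul_nonneg hA (by split_ifs <;> norm_num))
      (sum_nonneg fun j _ => mul_nonneg (hb j) (coeff_pow_nonneg ih j i))

theorem coeff_picardLimit_nonneg (hA : 0 ≤ A) (hb : ∀ j, 0 ≤ b j) (i : ℕ) :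
    0 ≤ coeff i (picardLimit A b N) := by
  rw [coeff_picardLimit]
  exact coeff_picardIter_nonneg hA hb _ i

theorem coeff_picardIter_le_majorant (hA : 0 ≤ A) (hb : ∀ j, 0 ≤ b j) (he : ∀ k, 0 < e k)
    (he0 : e 0 = 1) (hmul : ∀ k l, e k * e l ≤ e (k + l))
    (hθ : ∑ j ∈ Icc 2 N, b j * A ^ (j - 1) / e (j - 1) ≤ 1) (n i : ℕ) :
    coeff i (picardIter A b N n) ≤ coeff i (X * catalanSeries A e) := by
  induction n generalizing i with
  | zero =>
    rw [picardIter, Function.iterate_zero_apply, map_zero]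
    exact coeff_X_mul_catalanSeries_nonneg hA (fun k => (he k).le) i
  | succ n ih =>
    rw [picardIter_succ]
    match i with
    | 0 =>
      rw [coeff_zero_eq_constantCoeff_apply, X_dvd_iff.1 (X_dvd_picardMap (X_dvd_picardIter n))]
      exact coeff_X_mul_catalanSeries_nonneg hA (fun k => (he k).le) 0
    | 1 =>
      rw [coeff_one_picardMap (X_dvd_picardIter n), coeff_succ_X_mul, coeff_catalanSeries, he0,
        catalan_zero, Nat.cast_one, mul_one, mul_one]
    | i + 2 =>
      rw [coeff_succ_X_mul, coeff_catalanSeries]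
      exact (coeff_picardMap_le hA hb he hmul hθ (coeff_picardIter_nonneg hA hb n) ih
        (i := i + 2) (by omega)).trans_eq (one_mul _)

theorem coeff_picardLimit_le_majorant (hA : 0 ≤ A) (hb : ∀ j, 0 ≤ b j) (he : ∀ k, 0 < e k)
    (he0 : e 0 = 1) (hmul : ∀ k l, e k * e l ≤ e (k + l))
    (hθ : ∑ j ∈ Icc 2 N, b j * A ^ (j - 1) / e (j - 1) ≤ 1) (i : ℕ) :
    coeff i (picardLimit A b N) ≤ coeff i (X * catalanSeries A e) := by
  rw [coeff_picardLimit]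
  exact coeff_picardIter_le_majorant hA hb he he0 hmul hθ _ i

theorem coeff_picardLimit_le (hA : 0 ≤ A) (hb : ∀ j, 0 ≤ b j) (he : ∀ k, 0 < e k)
    (he0 : e 0 = 1) (hmul : ∀ k l, e k * e l ≤ e (k + l))
    (hθ : ∑ j ∈ Icc 2 N, b j * A ^ (j - 1) / e (j - 1) ≤ θ) (hθ1 : θ ≤ 1) {i : ℕ} (hi : 2 ≤ i) :
    coeff i (picardLimit A b N) ≤ θ * (A * e (i - 1) * catalan (i - 1)) := by
  rw [← picardMap_picardLimit]
  exact coeff_picardMap_le hA hb he hmul hθ (coeff_picardLimit_nonneg hA hb)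
    (coeff_picardLimit_le_majorant hA hb he he0 hmul (hθ.trans hθ1)) hi

theorem coeff_picardLimit_pos (hA : 0 < A) (hb : ∀ j, 0 ≤ b j) (hb2 : 0 < b 2) (hN : 2 ≤ N)
    {i : ℕ} (hi : 1 ≤ i) : 0 < coeff i (picardLimit A b N) := by
  set L := picardLimit A b N
  have hL0 := coeff_picardLimit_nonneg (N := N) hA.le hb
  induction i, hi using Nat.le_induction with
  | base => rw [coeff_one_picardLimit]; exact hA
  | succ i hi ih =>
    have hsq : A * coeff i L ≤ coeff (i + 1) (L ^ 2) := by
      rw [pow_two, coeff_mul]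
      nth_rw 1 [← coeff_one_picardLimit (a := A) (b := b) (N := N)]
      have hmem : ((1, i) : ℕ × ℕ) ∈ antidiagonal (i + 1) := mem_antidiagonal.2 (add_comm 1 i)
      exact single_le_sum (f := fun kl : ℕ × ℕ => coeff kl.1 L * coeff kl.2 L)
        (fun kl _ => mul_nonneg (hL0 _) (hL0 _)) hmem
    have hfix := congrArg (coeff (i + 1)) (picardMap_picardLimit (a := A) (b := b) (N := N))
    rw [coeff_picardMap, coeff_X, if_neg (by omega), mul_zero, zero_add] at hfix
    calc 0 < b 2 * (A * coeff i L) := by positivity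
      _ ≤ b 2 * coeff (i + 1) (L ^ 2) := mul_le_mul_of_nonneg_left hsq hb2.le
      _ ≤ ∑ j ∈ Icc 2 N, b j * coeff (i + 1) (L ^ j) :=
          single_le_sum (f := fun j => b j * coeff (i + 1) (L ^ j))
            (fun j _ => mul_nonneg (hb j) (coeff_pow_nonneg hL0 j _)) (mem_Icc.2 ⟨le_rfl, hN⟩)
      _ = coeff (i + 1) L := hfix

theorem exists_summable_norm_coeff_picardLimit_mul_pow (hA : 0 ≤ A) (hb : ∀ j, 0 ≤ b j) :
    ∃ ε > 0, ∀ s : ℝ, |s| < ε → Summable fun n => ‖coeff n (picardLimit A b N) * s ^ n‖ := by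
  set B := ∑ j ∈ Icc 2 N, b j
  have hB : 0 ≤ B := sum_nonneg fun j _ => hb j
  obtain ⟨q, hq, hAq, hBq⟩ : ∃ q : ℝ, 0 < q ∧ A / q ≤ 1 ∧ B * A / q ≤ 1 := by
    refine ⟨(A + 1) * (B + 1), by positivity, div_le_one_of_le₀ ?_ (by positivity),
      div_le_one_of_le₀ ?_ (by positivity)⟩ <;> nlinarith
  have hθ : ∑ j ∈ Icc 2 N, b j * A ^ (j - 1) / q ^ (j - 1) ≤ 1 :=
    calc ∑ j ∈ Icc 2 N, b j * A ^ (j - 1) / q ^ (j - 1) ≤ ∑ j ∈ Icc 2 N, b j * (A / q) :=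
          sum_le_sum fun j hj => by
            rw [mul_div_assoc, ← div_pow]
            exact mul_le_mul_of_nonneg_left (pow_le_of_le_one (by positivity) hAq
              (by have := (mem_Icc.1 hj).1; omega)) (hb j)
      _ = B * A / q := by rw [← sum_mul, mul_div_assoc']
      _ ≤ 1 := hBq
  have hcoeff (k : ℕ) : ‖coeff (k + 1) (picardLimit A b N)‖ ≤ A * (4 * q) ^ k := by
    rw [Real.norm_of_nonneg (coeff_picardLimit_nonneg hA hb _)]
    calc coeff (k + 1) (picardLimit A b N)
        ≤ coeff (k + 1) (X * catalanSeries A (q ^ ·)) :=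
          coeff_picardLimit_le_majorant hA hb (pow_pos hq) (pow_zero q)
            (fun k l => (pow_add q k l).ge) hθ _
      _ = A * q ^ k * catalan k := by rw [coeff_succ_X_mul, coeff_catalanSeries]
      _ ≤ A * q ^ k * 4 ^ k := by gcongr; exact_mod_cast catalan_le_four_pow k
      _ = A * (4 * q) ^ k := by ring
  refine ⟨(4 * q)⁻¹, by positivity, fun s hs => ?_⟩
  have hr : 4 * q * |s| < 1 := by
    have := mul_lt_mul_of_pos_left hs (by positivity : 0 < 4 * q)
    rwa [mul_inv_cancel₀ (by positivity)] at this
  refine (summable_nat_add_iff 1).1 (Summable.of_nonneg_of_le (fun _ => norm_nonneg _)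
    (fun k => ?_) ((summable_geometric_of_lt_one (by positivity) hr).mul_left (A * |s|)))
  rw [norm_mul, norm_pow, Real.norm_eq_abs]
  calc ‖coeff (k + 1) (picardLimit A b N)‖ * |s| ^ (k + 1)
      ≤ A * (4 * q) ^ k * |s| ^ (k + 1) := by gcongr; exact hcoeff k
    _ = A * |s| * (4 * q * |s|) ^ k := by ring

end PicardBounds

section LogConvex

variable {M : ℕ → ℝ}

theorem monotone_succ_div_of_logConvex (hpos : ∀ k, 0 < M k)
    (hlc : ∀ k, 1 ≤ k → M k ^ 2 ≤ M (k - 1) * M (k + 1)) : Monotone fun k => M (k + 1) / M k :=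
  monotone_nat_of_le_succ fun k => by
    rw [div_le_div_iff₀ (hpos k) (hpos (k + 1)), ← pow_two, mul_comm]
    exact hlc (k + 1) (by omega)

theorem mul_le_mul_add_of_logConvex (hpos : ∀ k, 0 < M k)
    (hlc : ∀ k, 1 ≤ k → M k ^ 2 ≤ M (k - 1) * M (k + 1)) (a b : ℕ) :
    M a * M b ≤ M 0 * M (a + b) := by
  induction a with
  | zero => rw [zero_add]
  | succ a ih =>
    have hstep : M (a + 1) ≤ M (a + b + 1) / M (a + b) * M a := by
      rw [← div_le_iff₀ (hpos a)]
      exact monotone_succ_div_of_logConvex hpos hlc (Nat.le_add_right a b)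
    have hratio : 0 ≤ M (a + b + 1) / M (a + b) := (div_pos (hpos _) (hpos _)).le
    calc M (a + 1) * M b ≤ M (a + b + 1) / M (a + b) * M a * M b :=
          mul_le_mul_of_nonneg_right hstep (hpos b).le
      _ ≤ M (a + b + 1) / M (a + b) * (M 0 * M (a + b)) := by
          rw [mul_assoc]; exact mul_le_mul_of_nonneg_left ih hratio
      _ = M 0 * M (a + 1 + b) := by
          rw [Nat.add_right_comm]; field_simp [(hpos (a + b)).ne']

theorem pow_mul_mul_pow_mul_le_of_logConvex (hpos : ∀ k, 0 < M k) (hM0 : M 0 = 1)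
    (hlc : ∀ k, 1 ≤ k → M k ^ 2 ≤ M (k - 1) * M (k + 1)) {μ : ℝ} (hμ : 0 ≤ μ) (k l : ℕ) :
    μ ^ k * M k * (μ ^ l * M l) ≤ μ ^ (k + l) * M (k + l) := by
  have hM := mul_le_mul_add_of_logConvex hpos hlc k l
  rw [hM0, one_mul] at hM
  calc μ ^ k * M k * (μ ^ l * M l) = μ ^ (k + l) * (M k * M l) := by ring
    _ ≤ μ ^ (k + l) * M (k + l) := by gcongr

end LogConvex

theorem sum_Icc_pow_sub_one_div_le {x : ℝ} (hx0 : 0 ≤ x) (hx1 : x < 1) (N : ℕ) :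
    ∑ j ∈ Icc 2 N, x ^ (j - 1) / j ≤ x / (2 * (1 - x)) :=
  calc ∑ j ∈ Icc 2 N, x ^ (j - 1) / j
      ≤ ∑ j ∈ Icc 2 N, x ^ (j - 1) / 2 := sum_le_sum fun j hj => by
        have : (2 : ℝ) ≤ j := by exact_mod_cast (mem_Icc.1 hj).1
        gcongr
    _ = (∑ i ∈ Ico 1 N, x ^ i) / 2 := by
        rw [← sum_div, ← Ico_add_one_right_eq_Icc, ← sum_Ico_add' _ 1 N 1]
        simp only [Nat.add_sub_cancel]
    _ ≤ x ^ 1 / (1 - x) / 2 := by gcongr; exact geom_sum_Ico_le_of_lt_one hx0 hx1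
    _ = x / (2 * (1 - x)) := by rw [pow_one, div_div, mul_comm]

-- `ψ_N(t) = ∑_{j=2}^N psiCoeff M A C ρ j * t ^ j`.
noncomputable def psiCoeff (M : ℕ → ℝ) (A C ρ : ℝ) (j : ℕ) : ℝ :=
  C * A * (ρ ^ (j - 1) * M (j - 1) / j)

section PsiCoeff

variable {M : ℕ → ℝ} {A C ρ : ℝ}

theorem psiCoeff_nonneg (hMpos : ∀ k, 0 < M k) (hA : 0 < A) (hC : 0 < C) (hρ : 0 < ρ)
    (j : ℕ) : 0 ≤ psiCoeff M A C ρ j := by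
  have := hMpos (j - 1)
  unfold psiCoeff
  positivity

theorem psiCoeff_two_pos (hMpos : ∀ k, 0 < M k) (hA : 0 < A) (hC : 0 < C) (hρ : 0 < ρ) :
    0 < psiCoeff M A C ρ 2 := by
  have := hMpos 1
  unfold psiCoeff
  positivity

theorem sum_psiCoeff_mul_pow_div_le (hMpos : ∀ k, 0 < M k) (hA : 0 < A) (hC : 0 < C)
    (hρ : 0 < ρ) (N : ℕ) :
    ∑ j ∈ Icc 2 N, psiCoeff M A C ρ j * A ^ (j - 1) /
      ((A * (C * A + 1) * ρ) ^ (j - 1) * M (j - 1)) ≤ 1 / 2 := by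
  set x := 1 / (C * A + 1)
  have hCA : 0 < C * A := mul_pos hC hA
  have hx0 : 0 ≤ x := by positivity
  have hx1 : x < 1 := by rw [div_lt_one (by linarith)]; linarith
  have hterm : ∀ j ∈ Icc 2 N, psiCoeff M A C ρ j * A ^ (j - 1) /
      ((A * (C * A + 1) * ρ) ^ (j - 1) * M (j - 1)) = C * A * (x ^ (j - 1) / j) := by
    intro j _
    have := hMpos (j - 1)
    simp only [psiCoeff, x, div_pow, mul_pow, one_pow]
    field_simp
  rw [sum_congr rfl hterm, ← mul_sum]
  calc C * A * ∑ j ∈ Icc 2 N, x ^ (j - 1) / j ≤ C * A * (x / (2 * (1 - x))) :=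
        mul_le_mul_of_nonneg_left (sum_Icc_pow_sub_one_div_le hx0 hx1 N) hCA.le
    _ = 1 / 2 := by simp only [x]; field_simp; ring

theorem natCast_mul_coeff_picardLimit_psiCoeff_lt (hMpos : ∀ k, 0 < M k)
    (hM0 : M 0 = 1) (hlc : ∀ k, 1 ≤ k → M k ^ 2 ≤ M (k - 1) * M (k + 1)) (hA : 0 < A)
    (hC : 0 < C) (hρ : 0 < ρ) (N : ℕ) {i : ℕ} (hi : 2 ≤ i) :
    (i : ℝ) * coeff i (picardLimit A (psiCoeff M A C ρ) N) <
      A * (4 * A * (C * A + 1) * ρ) ^ (i - 1) * M (i - 1) := by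
  obtain ⟨μ, hμ_def⟩ : ∃ μ, μ = A * (C * A + 1) * ρ := ⟨_, rfl⟩
  have hμ : 0 < μ := by rw [hμ_def]; positivity
  have hθ := sum_psiCoeff_mul_pow_div_le hMpos hA hC hρ N
  rw [← hμ_def] at hθ
  have hc := coeff_picardLimit_le (N := N) hA.le (psiCoeff_nonneg hMpos hA hC hρ)
    (fun k => mul_pos (pow_pos hμ k) (hMpos k)) (by simp [hM0])
    (pow_mul_mul_pow_mul_le_of_logConvex hMpos hM0 hlc hμ.le) hθ (by norm_num) hi
  obtain ⟨n, rfl⟩ : ∃ n, i = n + 1 := ⟨i - 1, by omega⟩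
  rw [Nat.add_sub_cancel] at hc ⊢
  have hpos : 0 < A * μ ^ n * M n * 4 ^ n := by have := hMpos n; positivity
  calc ((n + 1 : ℕ) : ℝ) * coeff (n + 1) (picardLimit A (psiCoeff M A C ρ) N)
      ≤ ((n + 1 : ℕ) : ℝ) * (1 / 2 * (A * (μ ^ n * M n) * catalan n)) := by gcongr
    _ = 1 / 2 * (A * μ ^ n * M n) * ((n + 1) * catalan n : ℕ) := by push_cast; ring
    _ ≤ 1 / 2 * (A * μ ^ n * M n) * 4 ^ n := by
        have := hMpos n
        rw [succ_mul_catalan_eq_centralBinom]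
        gcongr
        exact_mod_cast Nat.centralBinom_le_four_pow n
    _ < A * μ ^ n * M n * 4 ^ n := by linarith
    _ = A * (4 * A * (C * A + 1) * ρ) ^ n * M n := by
        rw [show 4 * A * (C * A + 1) * ρ = 4 * μ by rw [hμ_def]; ring, mul_pow]; ring

end PsiCoeff

theorem statement_3_general (M : ℕ → ℝ) (hMpos : ∀ k, 0 < M k) (hM0 : M 0 = 1)
    (hlc : ∀ k : ℕ, 1 ≤ k → (M k) ^ 2 ≤ M (k - 1) * M (k + 1))
    (A C ρ : ℝ) (hA : 0 < A) (hC : 0 < C) (hρ : 0 < ρ) (N : ℕ) (hN : 2 ≤ N) :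
    ∃ (c : ℕ → ℝ) (ε : ℝ), 0 < ε ∧ c 0 = 0 ∧ c 1 = A ∧
      (∀ s : ℝ, |s| < ε → Summable (fun i : ℕ => c i * s ^ i)) ∧
      (∀ s : ℝ, |s| < ε →
        (∑' i : ℕ, c i * s ^ i) =
          A * s + C * A * ∑ j ∈ Finset.Icc 2 N,
            ρ ^ (j - 1) * M (j - 1) / (j : ℝ) * (∑' i : ℕ, c i * s ^ i) ^ j) ∧
      (∀ i : ℕ, 2 ≤ i → i ≤ N →
        0 < (i : ℝ) * c i ∧
          (i : ℝ) * c i < A * (4 * A * (C * A + 1) * ρ) ^ (i - 1) * M (i - 1)) := by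
  have hb := psiCoeff_nonneg hMpos hA hC hρ
  obtain ⟨ε, hε, hL⟩ := exists_summable_norm_coeff_picardLimit_mul_pow (N := N) hA.le hb
  refine ⟨fun i => coeff i (picardLimit A (psiCoeff M A C ρ) N), ε, hε, coeff_zero_picardLimit,
    coeff_one_picardLimit, fun s hs => (hL s hs).of_norm, fun s hs => ?_,
    fun i hi _ => ⟨?_, ?_⟩⟩
  · refine (tsum_coeff_picardLimit_mul_pow (hL s hs)).trans ?_
    rw [mul_sum]
    simp only [psiCoeff, mul_assoc]
  · have := coeff_picardLimit_pos hA hb (psiCoeff_two_pos hMpos hA hC hρ) hN (by omega : 1 ≤ i)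
    positivity
  · exact natCast_mul_coeff_picardLimit_psiCoeff_lt hMpos hM0 hlc hA hC hρ N hi

/-- Given a log-convex weight sequence `M`, constants `A, C, ρ > 0` and
`N ≥ 2`, with `ψ_N(t) = C·A·Σ_{j=2}^N (ρ^{j-1} M_{j-1}/j) t^j`, there are coefficients
`c_i` and `ε > 0` so that `g(s) = Σ_{i≥1} c_i s^i` converges for `|s| < ε`, solves
`g(s) = A·s + ψ_N(g(s))` there, has `c₁ = A`, and `0 < i·c_i < A·(4A(CA+1)ρ)^{i-1}·M_{i-1}`
for `2 ≤ i ≤ N`. -/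
theorem statement_3 (M : ℕ → ℝ) (hMpos : ∀ k, 0 < M k) (hM0 : M 0 = 1) (hM01 : 1 ≤ M 1)
    (hlc : ∀ k : ℕ, 1 ≤ k → (M k) ^ 2 ≤ M (k - 1) * M (k + 1))
    (A C ρ : ℝ) (hA : 0 < A) (hC : 0 < C) (hρ : 0 < ρ) (N : ℕ) (hN : 2 ≤ N) :
    ∃ (c : ℕ → ℝ) (ε : ℝ), 0 < ε ∧ c 0 = 0 ∧ c 1 = A ∧
      (∀ s : ℝ, |s| < ε → Summable (fun i : ℕ => c i * s ^ i)) ∧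
      (∀ s : ℝ, |s| < ε →
        (∑' i : ℕ, c i * s ^ i) =
          A * s + C * A * ∑ j ∈ Finset.Icc 2 N,
            ρ ^ (j - 1) * M (j - 1) / (j : ℝ) * (∑' i : ℕ, c i * s ^ i) ^ j) ∧
      (∀ i : ℕ, 2 ≤ i → i ≤ N →
        0 < (i : ℝ) * c i ∧
          (i : ℝ) * c i < A * (4 * A * (C * A + 1) * ρ) ^ (i - 1) * M (i - 1)) :=
  statement_3_general M hMpos hM0 hlc A C ρ hA hC hρ N hN
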